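/- If U and V are closed surreal substructures, then the imbrication U ⧸ V = Ξ_U(Ξ_V(No)) is a closed surreal substructure. -/

import Mathlib

open Ordinal

attribute [local instance] Classical.propDecidable

/-- A surreal number presented as a sign sequence: a map from an ordinal (its
length) to `{-1, +1}`, extended by `0` beyond its length. -/
structure SSurreal : Type 1 where
  length : Ordinal.{0}
  sign : Ordinal → ℤ
  sign_mem : ∀ α, α < length → sign α = 1 ∨ sign α = -1
  sign_zero : ∀ α, ¬ α < length → sign α = 0

namespace SSurreal

/-- Simplicity: `x ⊑ y`, i.e. `x` is an initial segment of `y`. -/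
def sle (x y : SSurreal) : Prop := ∀ α, α < x.length → x.sign α = y.sign α

/-- Strict simplicity `x ⊏ y`. -/
def slt (x y : SSurreal) : Prop := sle x y ∧ x ≠ y

/-- The (lexicographic, Conway) order on sign sequences. -/
def lt (x y : SSurreal) : Prop :=
  ∃ α, (∀ β, β < α → x.sign β = y.sign β) ∧ x.sign α < y.sign α

/-- The empty sign sequence, i.e. the surreal number `0`. -/
noncomputable def zero : SSurreal :=
  ⟨0, fun _ => 0, fun α h => absurd h (fun h' => lt_irrefl α (h'.trans_le (zero_le : (0 : Ordinal) ≤ α))), fun _ _ => rfl⟩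

/-- The ordinal `o` viewed as the constant `+1` sign sequence of length `o`. -/
noncomputable def ofOrdinal (o : Ordinal) : SSurreal :=
  ⟨o, fun α => if α < o then 1 else 0, fun α h => Or.inl (if_pos h), fun α h => if_neg h⟩

/-- The surreal number `1`. -/
noncomputable def one : SSurreal := ofOrdinal 1

/-- The surreal number `-1`. -/
noncomputable def negOne : SSurreal :=
  ⟨1, fun α => if α < 1 then -1 else 0, fun α h => Or.inr (if_pos h), fun α h => if_neg h⟩

/-- Negation: flip every sign. -/
noncomputable def neg (x : SSurreal) : SSurreal :=
  ⟨x.length, fun α => - x.sign α,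
    fun α h => by rcases x.sign_mem α h with h' | h' <;> simp [h'],
    fun α h => by simp [x.sign_zero α h]⟩

/-- Concatenation `x ∔ y` of sign sequences. -/
noncomputable def concat (x y : SSurreal) : SSurreal where
  length := x.length + y.length
  sign α := if α < x.length then x.sign α else y.sign (α - x.length)
  sign_mem := by
    intro α h
    by_cases hx : α < x.length
    · rw [if_pos hx]; exact x.sign_mem α hx
    · rw [if_neg hx]
      refine y.sign_mem _ ?_
      have hle : x.length ≤ α := not_lt.mp hx
      have := Ordinal.sub_lt_of_le hle (c := y.length)
      exact this.mpr h
  sign_zero := by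
    intro α h
    have hx : ¬ α < x.length := fun hx =>
      h (hx.trans_le le_self_add)
    rw [if_neg hx]
    refine y.sign_zero _ ?_
    intro hy
    exact h ((Ordinal.sub_lt_of_le (not_lt.mp hx)).mp hy)

/-- The concatenation product `x ⨰ y` of sign sequences. -/
noncomputable def mul (x y : SSurreal) : SSurreal where
  length := x.length * y.length
  sign γ := if γ < x.length * y.length then y.sign (γ / x.length) * x.sign (γ % x.length) else 0
  sign_mem := by
    intro γ h
    rw [if_pos h]
    have hx0 : x.length ≠ 0 := by
      intro h0; rw [h0, zero_mul] at h; exact lt_irrefl γ (h.trans_le (zero_le : (0 : Ordinal) ≤ γ))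
    have h1 : γ / x.length < y.length := by
      rwa [Ordinal.div_lt hx0]
    have h2 : γ % x.length < x.length := Ordinal.mod_lt γ hx0
    rcases y.sign_mem _ h1 with hy | hy <;> rcases x.sign_mem _ h2 with hx | hx <;>
      simp [hy, hx]
  sign_zero := fun γ h => if_neg h

/-- `s` is the supremum of `C` with respect to simplicity. -/
def IsSimpSup (C : Set SSurreal) (s : SSurreal) : Prop :=
  (∀ x ∈ C, sle x s) ∧ ∀ t, (∀ x ∈ C, sle x t) → sle s t

/-- The supremum of a ⊏-chain of sign sequences (their union), when it
exists; junk value `zero` otherwise. -/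
noncomputable def chainSup (C : Set SSurreal) : SSurreal :=
  if h : ∃ s, IsSimpSup C s then h.choose else zero

/-- Transfinite concatenation `[α, f] = ∔_{γ<α} f(γ)`. -/
noncomputable def concatSum (α : Ordinal) (f : Ordinal → SSurreal) : SSurreal :=
  Ordinal.limitRecOn α zero (fun β ih => concat ih (f β))
    (fun γ _ ih => chainSup (Set.range fun p : Set.Iio γ => ih p.1 p.2))

/-- Restriction of `z` to an initial segment of length (at most) `β`. -/
noncomputable def trunc (z : SSurreal) (β : Ordinal) : SSurreal where
  length := min β z.length
  sign α := if α < min β z.length then z.sign α else 0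
  sign_mem := fun α h => by
    rw [if_pos h]; exact z.sign_mem α (h.trans_le (min_le_right _ _))
  sign_zero := fun α h => if_neg h

/-- The number of `+1` signs occurring in `s` strictly below `γ`. -/
noncomputable def countPlus (s : Ordinal → ℤ) (γ : Ordinal) : Ordinal :=
  Ordinal.limitRecOn γ 0 (fun β ih => if s β = 1 then ih + 1 else ih)
    (fun γ' _ ih => ⨆ β : Set.Iio γ', ih β.1 β.2)

/-- `τ_u`: the ordinal number of `+1` signs in the sign sequence of `u`. -/
noncomputable def tau (u : SSurreal) : Ordinal := countPlus u.sign u.length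

end SSurreal

namespace SSurreal

/-- `Ξ` is the parametrisation of the surreal substructure `S`: a
`(<, ⊏)`-isomorphism from `No` onto `S`. -/
def IsSubstructurePar (S : Set SSurreal) (Ξ : SSurreal → SSurreal) : Prop :=
  (∀ z, Ξ z ∈ S) ∧ (∀ y ∈ S, ∃ z, Ξ z = y) ∧
  (∀ z w, lt z w ↔ lt (Ξ z) (Ξ w)) ∧ (∀ z w, slt z w ↔ slt (Ξ z) (Ξ w))

/-- The parametrisation `Ξ` is closed: it commutes with simplicity-suprema of
nonempty ⊏-chains. -/
def IsClosedPar (Ξ : SSurreal → SSurreal) : Prop :=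
  ∀ C : Set SSurreal, C.Nonempty → IsChain slt C →
    ∀ s, IsSimpSup C s → IsSimpSup (Ξ '' C) (Ξ s)

end SSurreal

namespace SSurreal

theorem isSubstructurePar_range {Ξ : SSurreal → SSurreal}
    (hlt : ∀ z w, lt z w ↔ lt (Ξ z) (Ξ w)) (hslt : ∀ z w, slt z w ↔ slt (Ξ z) (Ξ w)) :
    IsSubstructurePar (Set.range Ξ) Ξ :=
  ⟨Set.mem_range_self, fun _ hy => hy, hlt, hslt⟩

theorem IsClosedPar.comp {Ξ Ξ' : SSurreal → SSurreal} (hΞ : IsClosedPar Ξ)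
    (hΞ' : IsClosedPar Ξ') (hmono : ∀ z w, slt z w → slt (Ξ' z) (Ξ' w)) :
    IsClosedPar (Ξ ∘ Ξ') := by
  intro C hne hchain s hs
  rw [Set.image_comp]
  exact hΞ _ (hne.image Ξ') (hchain.image_of_map_rel slt slt Ξ' hmono) _ (hΞ' C hne hchain s hs)

end SSurreal

open SSurreal in
/-- the imbrication `U ⧸ V = Ξ_U(Ξ_V(No))` of closed surreal
substructures is a closed surreal substructure. -/
theorem imbrication_of_closed_is_closed (U V : Set SSurreal)
    (ΞU ΞV : SSurreal → SSurreal)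
    (hU : IsSubstructurePar U ΞU) (hUcl : IsClosedPar ΞU)
    (hV : IsSubstructurePar V ΞV) (hVcl : IsClosedPar ΞV) :
    IsSubstructurePar (Set.range (ΞU ∘ ΞV)) (ΞU ∘ ΞV) ∧
    IsClosedPar (ΞU ∘ ΞV) := by
  obtain ⟨-, -, hUlt, hUslt⟩ := hU
  obtain ⟨-, -, hVlt, hVslt⟩ := hV
  exact ⟨isSubstructurePar_range (fun z w => (hVlt z w).trans (hUlt _ _))
      (fun z w => (hVslt z w).trans (hUslt _ _)),
    hUcl.comp hVcl fun z w => (hVslt z w).mp⟩
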